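/- arXiv:2505.12479 — 3 statements merged into one kernel-verified Lean document; each statement's English description precedes it below -/
import Mathlib

section
/- Let s > 0, α ≥ 1, μ > 0, D ≥ 0, and let 0 < γ' ≤ γ ≤ γ_0 be real numbers. Then [(1 + 2/(γμ))·γ²·F_{s,α}(γ) + (1 + 2/(γ'μ))·γ'²·F_{s,α}(γ')]·D ≤ 2D·(γ²/2 + 2γ²·γ_0^{α−1}/(μ·s^{α/2})). -/
/-- The threshold-scaling function of γ-FedHT:
`F_{s,α}(x) = x^α · s^{α/2} / (x^{2α} + s^α)` (real powers). -/
noncomputable def thresholdScale (s α x : ℝ) : ℝ :=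
  (x ^ α * s ^ (α / 2)) / (x ^ (2 * α) + s ^ α)

lemma tsc_sq (s α x : ℝ) (hx : 0 ≤ x) :
    x ^ (2 * α) = (x ^ α) ^ 2 := by
  rw [show (2:ℝ) * α = α * 2 by ring, Real.rpow_mul hx]
  exact_mod_cast Real.rpow_natCast (x ^ α) 2

lemma tsc_s (s α : ℝ) (hs : 0 ≤ s) : s ^ α = (s ^ (α / 2)) ^ 2 := by
  nth_rewrite 1 [show α = (α/2) * 2 by ring]
  rw [Real.rpow_mul hs]
  exact_mod_cast Real.rpow_natCast (s ^ (α/2)) 2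

lemma F_le_half (s α x : ℝ) (hs : 0 < s) (hx : 0 ≤ x) :
    thresholdScale s α x ≤ 1 / 2 := by
  unfold thresholdScale
  have hd : 0 < x ^ (2 * α) + s ^ α := by positivity
  rw [div_le_iff₀ hd, tsc_sq s α x hx, tsc_s s α hs.le]
  nlinarith [sq_nonneg (x ^ α - s ^ (α/2))]

lemma F_le (s α x : ℝ) (hs : 0 < s) (hx : 0 ≤ x) :
    thresholdScale s α x ≤ x ^ α / s ^ (α / 2) := by
  unfold thresholdScale
  have hsa : (0:ℝ) < s ^ α := Real.rpow_pos_of_pos hs α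
  have hd : 0 < x ^ (2 * α) + s ^ α := by positivity
  have hs2 : (0:ℝ) < s ^ (α/2) := Real.rpow_pos_of_pos hs _
  rw [div_le_div_iff₀ hd hs2]
  have h1 : x ^ α * s ^ (α/2) * s ^ (α/2) = x ^ α * s ^ α := by
    rw [tsc_s s α hs.le]; ring
  rw [h1]
  have hxa : 0 ≤ x ^ α := Real.rpow_nonneg hx α
  have hx2a : 0 ≤ x ^ (2*α) := Real.rpow_nonneg hx _
  nlinarith

lemma term_bound (s α μ γ₀ γ x : ℝ) (hs : 0 < s) (hα : 1 ≤ α) (hμ : 0 < μ)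
    (hx : 0 < x) (hxγ : x ≤ γ) (hγγ₀ : γ ≤ γ₀) :
    (1 + 2 / (x * μ)) * x ^ 2 * thresholdScale s α x ≤
      γ ^ 2 / 2 + 2 * γ ^ 2 * γ₀ ^ (α - 1) / (μ * s ^ (α / 2)) := by
  have hγ0 : 0 < γ₀ := lt_of_lt_of_le (lt_of_lt_of_le hx hxγ) hγγ₀
  have hs2 : (0:ℝ) < s ^ (α/2) := Real.rpow_pos_of_pos hs _
  have hF1 := F_le_half s α x hs hx.le
  have hF2 := F_le s α x hs hx.le
  have hFnn : 0 ≤ thresholdScale s α x := by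
    unfold thresholdScale; positivity
  have key : (1 + 2 / (x * μ)) * x ^ 2 * thresholdScale s α x
      = x ^ 2 * thresholdScale s α x + (2 * x / μ) * thresholdScale s α x := by
    field_simp
  rw [key]
  have h1 : x ^ 2 * thresholdScale s α x ≤ γ ^ 2 / 2 := by
    have : x ^ 2 ≤ γ ^ 2 := by nlinarith
    nlinarith
  have h2 : (2 * x / μ) * thresholdScale s α x ≤ 2 * γ ^ 2 * γ₀ ^ (α - 1) / (μ * s ^ (α/2)) := by
    have step1 : (2 * x / μ) * thresholdScale s α x ≤ (2 * x / μ) * (x ^ α / s ^ (α/2)) := by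
      apply mul_le_mul_of_nonneg_left hF2; positivity
    refine step1.trans ?_
    have hxa : x * x ^ α ≤ γ ^ 2 * γ₀ ^ (α - 1) := by
      have hxsplit : x ^ α = x * x ^ (α - 1) := by
        rw [show α = 1 + (α - 1) by ring, Real.rpow_add hx, Real.rpow_one]
        ring_nf
      rw [hxsplit]
      have h3 : x ^ (α - 1) ≤ γ₀ ^ (α - 1) :=
        Real.rpow_le_rpow hx.le (hxγ.trans hγγ₀) (by linarith)
      have h4 : 0 ≤ x ^ (α - 1) := Real.rpow_nonneg hx.le _
      have h5 : x * x ≤ γ ^ 2 := by nlinarith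
      calc x * (x * x ^ (α-1)) = (x * x) * x ^ (α-1) := by ring
        _ ≤ γ ^ 2 * γ₀ ^ (α-1) := by
          apply mul_le_mul h5 h3 h4 (by positivity)
    have e : 2 * x / μ * (x ^ α / s ^ (α/2)) = 2 * (x * x ^ α) / (μ * s ^ (α/2)) := by
      field_simp
    rw [e, div_le_div_iff₀ (by positivity) (by positivity)]
    nlinarith [mul_le_mul_of_nonneg_right hxa (show (0:ℝ) ≤ μ * s ^ (α/2) by positivity)]
  linarith

/-- The bound on the compression-error term `A₁` in the strongly convex
convergence proof of γ-FedHT, for consecutive nonincreasing stepsizes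
`0 < γ' ≤ γ ≤ γ₀`. -/
theorem compressionError_A1_bound (s α μ D γ₀ γ γ' : ℝ)
    (hs : 0 < s) (hα : 1 ≤ α) (hμ : 0 < μ) (hD : 0 ≤ D)
    (hγ' : 0 < γ') (hγ'γ : γ' ≤ γ) (hγγ₀ : γ ≤ γ₀) :
    ((1 + 2 / (γ * μ)) * γ ^ 2 * thresholdScale s α γ +
        (1 + 2 / (γ' * μ)) * γ' ^ 2 * thresholdScale s α γ') * D ≤
      2 * D * (γ ^ 2 / 2 + 2 * γ ^ 2 * γ₀ ^ (α - 1) / (μ * s ^ (α / 2))) := by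
  have hγ : 0 < γ := lt_of_lt_of_le hγ' hγ'γ
  have h1 := term_bound s α μ γ₀ γ γ hs hα hμ hγ le_rfl hγγ₀
  have h2 := term_bound s α μ γ₀ γ γ' hs hα hμ hγ' hγ'γ hγγ₀
  have := add_le_add h1 h2
  calc ((1 + 2 / (γ * μ)) * γ ^ 2 * thresholdScale s α γ +
        (1 + 2 / (γ' * μ)) * γ' ^ 2 * thresholdScale s α γ') * D
      ≤ (2 * (γ ^ 2 / 2 + 2 * γ ^ 2 * γ₀ ^ (α - 1) / (μ * s ^ (α / 2)))) * D := by
        apply mul_le_mul_of_nonneg_right _ hD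
        linarith
    _ = 2 * D * (γ ^ 2 / 2 + 2 * γ ^ 2 * γ₀ ^ (α - 1) / (μ * s ^ (α / 2))) := by ring
end

section
/- Strongly convex recursion lemma for γ-FedHT: let μ > 0, B ≥ 0, D ≥ 0, s > 0, α ≥ 1, β > 2/μ, b > 0 with β·μ ≤ 2(1 + b), and set γ_t := β/(t + b) for t ∈ ℕ (so γ_0 = β/b). Suppose a sequence Δ : ℕ → [0, ∞) satisfies, for all t ≥ 1, Δ_{t+1} ≤ (1 − γ_t μ/2)·Δ_t + (1 + γ_t μ/2)·γ_t²·B + [(1 + 2/(γ_t μ))·γ_t²·F_{s,α}(γ_t) + (1 + 2/(γ_{t+1} μ))·γ_{t+1}²·F_{s,α}(γ_{t+1})]·D. Then for all t ≥ 1, Δ_t ≤ v/(b + t), where v = max{ (2β²/(βμ − 2))·[(1 + γ_0 μ/2)·B + (1/2 + 2γ_0^{α−1}/(μ·s^{α/2}))·2D], (1 + b)·Δ_1 }. -/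
private lemma fedht_key_bound {s α μ g0 x : ℝ} (hs : 0 < s) (hα : 1 ≤ α) (hμ : 0 < μ)
    (hx : 0 < x) (hxg : x ≤ g0) :
    (1 + 2 / (x * μ)) * x ^ 2 * thresholdScale s α x ≤
      (1 / 2 + 2 * g0 ^ (α - 1) / (μ * s ^ (α / 2))) * x ^ 2 := by
  set P := x ^ α with hP
  set Q := s ^ (α / 2) with hQ
  have hPpos : 0 < P := Real.rpow_pos_of_pos hx α
  have hQpos : 0 < Q := Real.rpow_pos_of_pos hs (α / 2)
  have h2a : x ^ (2 * α) = P ^ 2 := by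
    rw [hP, ← Real.rpow_natCast (x ^ α) 2, ← Real.rpow_mul hx.le]
    norm_num [mul_comm]
  have hsa : s ^ α = Q ^ 2 := by
    rw [hQ, ← Real.rpow_natCast (s ^ (α / 2)) 2, ← Real.rpow_mul hs.le]
    norm_num
  have hF : thresholdScale s α x = P * Q / (P ^ 2 + Q ^ 2) := by
    rw [thresholdScale, h2a, hsa]
  have hden : 0 < P ^ 2 + Q ^ 2 := by positivity
  have hFhalf : thresholdScale s α x ≤ 1 / 2 := by
    rw [hF, div_le_iff₀ hden]; nlinarith [sq_nonneg (P - Q)]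
  have hFlin : thresholdScale s α x ≤ P / Q := by
    rw [hF, div_le_div_iff₀ hden hQpos]; nlinarith [sq_nonneg P, mul_pos hPpos hQpos]
  have hsplit : (1 + 2 / (x * μ)) * x ^ 2 * thresholdScale s α x =
      x ^ 2 * thresholdScale s α x + (2 * x / μ) * thresholdScale s α x := by
    field_simp
  rw [hsplit]
  have h1 : x ^ 2 * thresholdScale s α x ≤ 1 / 2 * x ^ 2 := by
    nlinarith [sq_nonneg x]
  have h2 : (2 * x / μ) * thresholdScale s α x ≤ 2 * g0 ^ (α - 1) / (μ * Q) * x ^ 2 := by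
    have hstep : 2 * x / μ * thresholdScale s α x ≤ 2 * x / μ * (P / Q) := by
      apply mul_le_mul_of_nonneg_left hFlin (by positivity)
    refine hstep.trans ?_
    have e1 : x ^ (α - 1) * x ^ (2:ℝ) = P * x := by
      rw [← Real.rpow_add hx, hP, show α - 1 + 2 = α + 1 by ring, Real.rpow_add hx,
        Real.rpow_one]
    have e3 : x ^ (2:ℝ) = x ^ (2:ℕ) := by
      rw [← Real.rpow_natCast x 2]; norm_num
    have hxP : x * P = x ^ (α - 1) * x ^ 2 := by
      rw [← e3, e1]; ring
    have hxle : x ^ (α - 1) ≤ g0 ^ (α - 1) :=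
      Real.rpow_le_rpow hx.le hxg (by linarith)
    have hxnn : 0 ≤ x ^ (α - 1) := Real.rpow_nonneg hx.le _
    have lhs_eq : 2 * x / μ * (P / Q) = 2 * (x ^ (α - 1) * x ^ 2) / (μ * Q) := by
      rw [← hxP]; field_simp
    have rhs_eq : 2 * g0 ^ (α - 1) / (μ * Q) * x ^ 2 =
        2 * (g0 ^ (α - 1) * x ^ 2) / (μ * Q) := by ring
    rw [lhs_eq, rhs_eq]
    gcongr
  linarith


set_option maxHeartbeats 1000000 in
/-- Strongly convex recursion lemma for γ-FedHT: if `Δ` satisfies the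
one-step recursion with stepsize `γ_t = β/(t+b)`, then `Δ_t ≤ v/(b+t)`
for all `t ≥ 1`, with the explicit constant `v`. -/
theorem stronglyConvex_recursion (μ B D s α β b : ℝ)
    (hμ : 0 < μ) (hB : 0 ≤ B) (hD : 0 ≤ D) (hs : 0 < s) (hα : 1 ≤ α)
    (hβ : 2 / μ < β) (hb : 0 < b) (hβb : β * μ ≤ 2 * (1 + b))
    (γ : ℕ → ℝ) (hγ : ∀ t : ℕ, γ t = β / ((t : ℝ) + b))
    (Δ : ℕ → ℝ) (hΔ : ∀ t, 0 ≤ Δ t)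
    (hrec : ∀ t : ℕ, 1 ≤ t →
      Δ (t + 1) ≤ (1 - γ t * μ / 2) * Δ t + (1 + γ t * μ / 2) * γ t ^ 2 * B +
        ((1 + 2 / (γ t * μ)) * γ t ^ 2 * thresholdScale s α (γ t) +
          (1 + 2 / (γ (t + 1) * μ)) * γ (t + 1) ^ 2 *
            thresholdScale s α (γ (t + 1))) * D) :
    ∀ t : ℕ, 1 ≤ t →
      Δ t ≤
        max
          (2 * β ^ 2 / (β * μ - 2) *
            ((1 + γ 0 * μ / 2) * B +
              (1 / 2 + 2 * γ 0 ^ (α - 1) / (μ * s ^ (α / 2))) * (2 * D)))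
          ((1 + b) * Δ 1) / (b + (t : ℝ)) := by
  have hβpos : 0 < β := lt_trans (by positivity) hβ
  have hβμ : 2 < β * μ := by
    have := (div_lt_iff₀ hμ).mp hβ; linarith
  have hβμ2 : 0 < β * μ - 2 := by linarith
  have hg0 : γ 0 = β / b := by rw [hγ 0]; norm_num
  have hg0pos : 0 < γ 0 := by rw [hg0]; positivity
  set c : ℝ := 1 / 2 + 2 * γ 0 ^ (α - 1) / (μ * s ^ (α / 2)) with hc
  set E : ℝ := (1 + γ 0 * μ / 2) * B + c * (2 * D) with hE
  set A : ℝ := 2 * β ^ 2 / (β * μ - 2) * E with hA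
  set v : ℝ := max A ((1 + b) * Δ 1) with hv
  clear_value c E A v
  have hcpos : 0 < c := by
    rw [hc]
    have h1 := Real.rpow_nonneg hg0pos.le (α - 1)
    have h2 := Real.rpow_pos_of_pos hs (α / 2)
    positivity
  have hEnn : 0 ≤ E := by
    rw [hE]
    have h1 : 0 ≤ (1 + γ 0 * μ / 2) * B :=
      mul_nonneg (by nlinarith) hB
    have h2 : 0 ≤ c * (2 * D) := mul_nonneg hcpos.le (by linarith)
    linarith
  have hAnn : 0 ≤ A := by
    rw [hA]
    positivity
  have hvA : A ≤ v := by rw [hv]; exact le_max_left _ _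
  have hvnn : 0 ≤ v := le_trans hAnn hvA
  have hEv : E ≤ (β * μ - 2) * v / (2 * β ^ 2) := by
    have hEA : E = A * (β * μ - 2) / (2 * β ^ 2) := by
      rw [hA]; field_simp; try ring
    rw [hEA, div_le_div_iff₀ (by positivity) (by positivity)]
    nlinarith [mul_nonneg (mul_nonneg (sub_nonneg.mpr hvA) hβμ2.le)
      (by positivity : (0:ℝ) ≤ 2 * β ^ 2)]
  -- main induction
  intro t ht
  induction t, ht using Nat.le_induction with
  | base =>
      rw [le_div_iff₀ (by positivity : (0:ℝ) < b + ((1:ℕ):ℝ))]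
      push_cast
      calc Δ 1 * (b + 1) = (1 + b) * Δ 1 := by ring
        _ ≤ v := by rw [hv]; exact le_max_right _ _
  | succ t ht' ih =>
      have hT : (0:ℝ) < (t : ℝ) + b := by positivity
      have hT1 : (1:ℝ) + b ≤ (t : ℝ) + b := by
        have : (1:ℝ) ≤ (t : ℝ) := by exact_mod_cast ht'
        linarith
      set T : ℝ := (t : ℝ) + b with hTdef
      have hγt : γ t = β / T := by rw [hγ t]
      have hγt1 : γ (t + 1) = β / (T + 1) := by
        rw [hγ (t + 1), hTdef]; push_cast; ring
      have hγtpos : 0 < γ t := by rw [hγt]; positivity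
      have hγt1pos : 0 < γ (t + 1) := by rw [hγt1]; positivity
      have hγtle0 : γ t ≤ γ 0 := by
        rw [hγt, hg0]
        apply div_le_div_of_nonneg_left hβpos.le hb
        linarith
      have hγt1le : γ (t + 1) ≤ γ t := by
        rw [hγt, hγt1]
        apply div_le_div_of_nonneg_left hβpos.le hT
        linarith
      have hγt1le0 : γ (t + 1) ≤ γ 0 := le_trans hγt1le hγtle0
      have hγμ2 : γ t * μ ≤ 2 := by
        rw [hγt, div_mul_eq_mul_div, div_le_iff₀ hT]
        nlinarith
      -- bound the three parts
      have hA1 : (1 - γ t * μ / 2) * Δ t ≤ (1 - γ t * μ / 2) * (v / T) := by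
        apply mul_le_mul_of_nonneg_left _ (by linarith)
        have h := ih
        rwa [show b + (t : ℝ) = T by rw [hTdef]; ring] at h
      have hA2 : (1 + γ t * μ / 2) * γ t ^ 2 * B ≤ (1 + γ 0 * μ / 2) * γ t ^ 2 * B := by
        apply mul_le_mul_of_nonneg_right _ hB
        apply mul_le_mul_of_nonneg_right _ (by positivity)
        nlinarith
      have hX1 : (1 + 2 / (γ t * μ)) * γ t ^ 2 * thresholdScale s α (γ t) ≤
          c * γ t ^ 2 := by
        rw [hc]; exact fedht_key_bound hs hα hμ hγtpos hγtle0
      have hX2' : (1 + 2 / (γ (t + 1) * μ)) * γ (t + 1) ^ 2 *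
          thresholdScale s α (γ (t + 1)) ≤ c * γ (t + 1) ^ 2 := by
        rw [hc]; exact fedht_key_bound hs hα hμ hγt1pos hγt1le0
      have hX2 : (1 + 2 / (γ (t + 1) * μ)) * γ (t + 1) ^ 2 *
          thresholdScale s α (γ (t + 1)) ≤ c * γ t ^ 2 := by
        refine hX2'.trans ?_
        apply mul_le_mul_of_nonneg_left _ hcpos.le
        nlinarith
      have hA3 : ((1 + 2 / (γ t * μ)) * γ t ^ 2 * thresholdScale s α (γ t) +
          (1 + 2 / (γ (t + 1) * μ)) * γ (t + 1) ^ 2 *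
            thresholdScale s α (γ (t + 1))) * D ≤ c * γ t ^ 2 * (2 * D) := by
        have h : (1 + 2 / (γ t * μ)) * γ t ^ 2 * thresholdScale s α (γ t) +
            (1 + 2 / (γ (t + 1) * μ)) * γ (t + 1) ^ 2 *
              thresholdScale s α (γ (t + 1)) ≤ 2 * (c * γ t ^ 2) := by linarith
        calc _ ≤ 2 * (c * γ t ^ 2) * D := mul_le_mul_of_nonneg_right h hD
          _ = c * γ t ^ 2 * (2 * D) := by ring
      have hmain : Δ (t + 1) ≤ (1 - γ t * μ / 2) * (v / T) + γ t ^ 2 * E := by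
        have h := hrec t ht'
        rw [hE]
        nlinarith [hA1, hA2, hA3, h]
      have hE2 : γ t ^ 2 * E ≤ γ t ^ 2 * ((β * μ - 2) * v / (2 * β ^ 2)) :=
        mul_le_mul_of_nonneg_left hEv (by positivity)
      -- final arithmetic
      have hfin : (1 - γ t * μ / 2) * (v / T) +
          γ t ^ 2 * ((β * μ - 2) * v / (2 * β ^ 2)) ≤ v / (T + 1) := by
        rw [hγt]
        have heq : (1 - β / T * μ / 2) * (v / T) +
            (β / T) ^ 2 * ((β * μ - 2) * v / (2 * β ^ 2)) = v * (T - 1) / T ^ 2 := by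
          field_simp
          ring
        rw [heq, div_le_div_iff₀ (by positivity) (by positivity)]
        nlinarith
      have hdone : Δ (t + 1) ≤ v / (T + 1) := le_trans hmain (by linarith)
      convert hdone using 2
      rw [hTdef]; push_cast; ring
end

section
/- Explicit-constant form of the strongly convex recursion: let μ > 0, L ≥ μ, let E ≥ 1 be an integer, B ≥ 0, D ≥ 0, s > 0, α ≥ 1, and set β = 3/μ, b = max{12L/μ, E} − 1, γ_t = β/(t + b). Suppose Δ : ℕ → [0, ∞) satisfies, for all t ≥ 1, Δ_{t+1} ≤ (1 − γ_t μ/2)·Δ_t + (1 + γ_t μ/2)·γ_t²·B + [(1 + 2/(γ_t μ))·γ_t²·F_{s,α}(γ_t) + (1 + 2/(γ_{t+1} μ))·γ_{t+1}²·F_{s,α}(γ_{t+1})]·D. Then for all t ≥ 1, Δ_t ≤ (1/(t + b))·{ (18/μ²)·[(1 + γ_0 μ/2)·B + (1/2 + 2γ_0^{α−1}/(μ·s^{α/2}))·2D] + (1 + b)·Δ_1 }. -/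
lemma key_bound (s α μ γ γ₀ : ℝ) (hs : 0 < s) (hα : 1 ≤ α) (hμ : 0 < μ)
    (hγ : 0 < γ) (hγ₀ : γ ≤ γ₀) :
    (1 + 2 / (γ * μ)) * γ ^ 2 * thresholdScale s α γ ≤
      γ ^ 2 * (1 / 2 + 2 * γ₀ ^ (α - 1) / (μ * s ^ (α / 2))) := by
  have ha : 0 < γ ^ α := Real.rpow_pos_of_pos hγ α
  have hc : 0 < s ^ (α / 2) := Real.rpow_pos_of_pos hs _
  have h2a : γ ^ (2 * α) = γ ^ α * γ ^ α := by rw [two_mul, Real.rpow_add hγ]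
  have h2c : s ^ α = s ^ (α / 2) * s ^ (α / 2) := by
    rw [← Real.rpow_add hs]; norm_num
  have hden : 0 < γ ^ (2 * α) + s ^ α := by
    rw [h2a, h2c]; nlinarith
  have hF1 : thresholdScale s α γ ≤ 1 / 2 := by
    rw [thresholdScale, div_le_iff₀ hden, h2a, h2c]
    nlinarith [sq_nonneg (γ ^ α - s ^ (α / 2))]
  have hF2 : thresholdScale s α γ ≤ γ ^ α / s ^ (α / 2) := by
    rw [thresholdScale, div_le_div_iff₀ hden hc, h2a, h2c]
    nlinarith [mul_pos (mul_pos ha ha) ha]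
  have hγne : γ ≠ 0 := hγ.ne'
  have hμne : μ ≠ 0 := hμ.ne'
  have hsplit : (1 + 2 / (γ * μ)) * γ ^ 2 = γ ^ 2 + 2 * γ / μ := by
    field_simp
  have hγα : γ ^ α = γ ^ (α - 1) * γ := by
    have := Real.rpow_add_one hγne (α - 1)
    rw [show α - 1 + 1 = α from by ring] at this
    rw [this]
  have hmono : γ ^ (α - 1) ≤ γ₀ ^ (α - 1) :=
    Real.rpow_le_rpow hγ.le hγ₀ (by linarith)
  have e1 : γ ^ 2 * thresholdScale s α γ ≤ γ ^ 2 * (1 / 2) :=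
    mul_le_mul_of_nonneg_left hF1 (sq_nonneg γ)
  have h2γμ : 0 ≤ 2 * γ / μ := by positivity
  have e2 : (2 * γ / μ) * thresholdScale s α γ ≤ (2 * γ / μ) * (γ ^ α / s ^ (α / 2)) :=
    mul_le_mul_of_nonneg_left hF2 h2γμ
  have e3 : (2 * γ / μ) * (γ ^ α / s ^ (α / 2)) ≤
      γ ^ 2 * (2 * γ₀ ^ (α - 1) / (μ * s ^ (α / 2))) := by
    rw [hγα]
    have lhs_eq : (2 * γ / μ) * (γ ^ (α - 1) * γ / s ^ (α / 2)) =
        (2 * γ ^ 2 / (μ * s ^ (α / 2))) * γ ^ (α - 1) := by ring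
    have rhs_eq : γ ^ 2 * (2 * γ₀ ^ (α - 1) / (μ * s ^ (α / 2))) =
        (2 * γ ^ 2 / (μ * s ^ (α / 2))) * γ₀ ^ (α - 1) := by ring
    rw [lhs_eq, rhs_eq]
    exact mul_le_mul_of_nonneg_left hmono (by positivity)
  calc (1 + 2 / (γ * μ)) * γ ^ 2 * thresholdScale s α γ
      = γ ^ 2 * thresholdScale s α γ + (2 * γ / μ) * thresholdScale s α γ := by
        rw [hsplit, add_mul]
    _ ≤ γ ^ 2 * (1 / 2) + γ ^ 2 * (2 * γ₀ ^ (α - 1) / (μ * s ^ (α / 2))) := by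
        linarith
    _ = γ ^ 2 * (1 / 2 + 2 * γ₀ ^ (α - 1) / (μ * s ^ (α / 2))) := by ring

set_option maxHeartbeats 1000000 in
/-- Explicit-constant form of the strongly convex recursion for γ-FedHT,
with `β = 3/μ`, `b = max{12L/μ, E} − 1` and `γ_t = β/(t+b)`. -/
theorem stronglyConvex_recursion_explicit (μ L B D s α : ℝ) (E : ℕ)
    (hμ : 0 < μ) (hL : μ ≤ L) (hE : 1 ≤ E)
    (hB : 0 ≤ B) (hD : 0 ≤ D) (hs : 0 < s) (hα : 1 ≤ α)
    (β b : ℝ) (hβ : β = 3 / μ) (hb : b = max (12 * L / μ) (E : ℝ) - 1)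
    (γ : ℕ → ℝ) (hγ : ∀ t : ℕ, γ t = β / ((t : ℝ) + b))
    (Δ : ℕ → ℝ) (hΔ : ∀ t, 0 ≤ Δ t)
    (hrec : ∀ t : ℕ, 1 ≤ t →
      Δ (t + 1) ≤ (1 - γ t * μ / 2) * Δ t + (1 + γ t * μ / 2) * γ t ^ 2 * B +
        ((1 + 2 / (γ t * μ)) * γ t ^ 2 * thresholdScale s α (γ t) +
          (1 + 2 / (γ (t + 1) * μ)) * γ (t + 1) ^ 2 *
            thresholdScale s α (γ (t + 1))) * D) :
    ∀ t : ℕ, 1 ≤ t →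
      Δ t ≤ 1 / ((t : ℝ) + b) *
        (18 / μ ^ 2 *
            ((1 + γ 0 * μ / 2) * B +
              (1 / 2 + 2 * γ 0 ^ (α - 1) / (μ * s ^ (α / 2))) * (2 * D)) +
          (1 + b) * Δ 1) := by
  have hμne : μ ≠ 0 := hμ.ne'
  have hb11 : (11 : ℝ) ≤ b := by
    have h12 : (12 : ℝ) ≤ 12 * L / μ := by
      rw [le_div_iff₀ hμ]; nlinarith
    have hm := le_max_left (12 * L / μ) (E : ℝ)
    rw [hb]; linarith
  have hβpos : 0 < β := by rw [hβ]; positivity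
  have hγpos : ∀ n : ℕ, 0 < γ n := fun n => by
    rw [hγ n]
    apply div_pos hβpos
    have : (0 : ℝ) ≤ (n : ℝ) := Nat.cast_nonneg n
    linarith
  have hγle : ∀ n : ℕ, γ n ≤ γ 0 := fun n => by
    rw [hγ n, hγ 0]
    have h0 : (0 : ℝ) < ((0 : ℕ) : ℝ) + b := by push_cast; linarith
    have hn : ((0 : ℕ) : ℝ) + b ≤ (n : ℝ) + b := by
      push_cast
      have : (0 : ℝ) ≤ (n : ℝ) := Nat.cast_nonneg n
      linarith
    exact div_le_div_of_nonneg_left hβpos.le h0 hn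
  set Kv : ℝ := 1 / 2 + 2 * γ 0 ^ (α - 1) / (μ * s ^ (α / 2)) with hKv
  set Av : ℝ := 18 / μ ^ 2 * ((1 + γ 0 * μ / 2) * B + Kv * (2 * D)) with hAv
  have hKnn : 0 ≤ Kv := by
    rw [hKv]
    have h1 : 0 ≤ γ 0 ^ (α - 1) := Real.rpow_nonneg (hγpos 0).le _
    have h2 : 0 < μ * s ^ (α / 2) := mul_pos hμ (Real.rpow_pos_of_pos hs _)
    have := div_nonneg (by linarith : (0:ℝ) ≤ 2 * γ 0 ^ (α - 1)) h2.le
    linarith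
  have hγ0μ : 0 ≤ γ 0 * μ / 2 :=
    div_nonneg (mul_nonneg (hγpos 0).le hμ.le) (by norm_num)
  have hA : 0 ≤ Av := by
    rw [hAv]
    apply mul_nonneg (by positivity)
    exact add_nonneg (mul_nonneg (by linarith) hB) (mul_nonneg hKnn (by linarith))
  have hCnn : 0 ≤ Av + (1 + b) * Δ 1 :=
    add_nonneg hA (mul_nonneg (by linarith) (hΔ 1))
  have hAC : Av ≤ Av + (1 + b) * Δ 1 :=
    le_add_of_nonneg_right (mul_nonneg (by linarith) (hΔ 1))
  clear_value Kv Av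
  intro t ht
  induction t, ht using Nat.le_induction with
  | base =>
      have h1b : (0 : ℝ) < 1 + b := by linarith
      have h1bne : (1 : ℝ) + b ≠ 0 := h1b.ne'
      have hcast : ((1 : ℕ) : ℝ) + b = 1 + b := by push_cast; ring
      rw [hcast]
      have e : 1 / (1 + b) * (Av + (1 + b) * Δ 1) = Av / (1 + b) + Δ 1 := by
        field_simp
      rw [e]
      have : 0 ≤ Av / (1 + b) := div_nonneg hA h1b.le
      linarith
  | succ n hn IH =>
      have hn1 : (1 : ℝ) ≤ (n : ℝ) := by exact_mod_cast hn
      set X : ℝ := (n : ℝ) + b with hXdef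
      clear_value X
      have hX12 : (12 : ℝ) ≤ X := by rw [hXdef]; linarith
      have hXpos : (0 : ℝ) < X := by linarith
      have hXne : X ≠ 0 := hXpos.ne'
      have hX1pos : (0 : ℝ) < X + 1 := by linarith
      have hγn : γ n = 3 / (μ * X) := by
        rw [hγ n, hβ, div_div, ← hXdef]
      have hγn1 : γ (n + 1) = 3 / (μ * (X + 1)) := by
        rw [hγ (n + 1), hβ, div_div, hXdef]
        push_cast; ring_nf
      have hc1 : γ n * μ / 2 = 3 / (2 * X) := by
        rw [hγn]; field_simp
      have hc2 : γ n ^ 2 = 9 / (μ ^ 2 * X ^ 2) := by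
        rw [hγn]; field_simp; ring
      have hγdec : γ (n + 1) ≤ γ n := by
        rw [hγn, hγn1]
        apply div_le_div_of_nonneg_left (by norm_num) (by positivity)
        nlinarith
      have hKa := key_bound s α μ (γ n) (γ 0) hs hα hμ (hγpos n) (hγle n)
      have hKb := key_bound s α μ (γ (n + 1)) (γ 0) hs hα hμ (hγpos (n + 1)) (hγle (n + 1))
      rw [← hKv] at hKa hKb
      have hsq : γ (n + 1) ^ 2 ≤ γ n ^ 2 :=
        pow_le_pow_left₀ (hγpos (n + 1)).le hγdec 2
      have hKb' : (1 + 2 / (γ (n + 1) * μ)) * γ (n + 1) ^ 2 *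
          thresholdScale s α (γ (n + 1)) ≤ γ n ^ 2 * Kv :=
        le_trans hKb (mul_le_mul_of_nonneg_right hsq hKnn)
      have h0 : 0 ≤ 1 - γ n * μ / 2 := by
        rw [hc1, sub_nonneg, div_le_one (by linarith)]; linarith
      have t1 := mul_le_mul_of_nonneg_left IH h0
      have hmul : γ n * μ ≤ γ 0 * μ := mul_le_mul_of_nonneg_right (hγle n) hμ.le
      have h' : 1 + γ n * μ / 2 ≤ 1 + γ 0 * μ / 2 := by linarith
      have t2 : (1 + γ n * μ / 2) * γ n ^ 2 * B ≤ (1 + γ 0 * μ / 2) * γ n ^ 2 * B :=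
        mul_le_mul_of_nonneg_right (mul_le_mul_of_nonneg_right h' (sq_nonneg (γ n))) hB
      have t3 := mul_le_mul_of_nonneg_right (add_le_add hKa hKb') hD
      have step1 : Δ (n + 1) ≤ (1 - γ n * μ / 2) * (1 / X * (Av + (1 + b) * Δ 1)) +
          (1 + γ 0 * μ / 2) * γ n ^ 2 * B + (γ n ^ 2 * Kv + γ n ^ 2 * Kv) * D := by
        linarith [hrec n hn, t1, t2, t3]
      rw [hc1, hc2] at step1
      have hcast : ((n + 1 : ℕ) : ℝ) + b = X + 1 := by
        rw [hXdef]; push_cast; ring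
      rw [hcast]
      have e1 : (1 + γ 0 * μ / 2) * (9 / (μ ^ 2 * X ^ 2)) * B +
          (9 / (μ ^ 2 * X ^ 2) * Kv + 9 / (μ ^ 2 * X ^ 2) * Kv) * D = Av / (2 * X ^ 2) := by
        rw [hAv]; ring
      have h2x : (0 : ℝ) < 2 * X ^ 2 := mul_pos two_pos (pow_pos hXpos 2)
      have e2 : Av / (2 * X ^ 2) ≤ (Av + (1 + b) * Δ 1) / (2 * X ^ 2) :=
        (div_le_div_iff_of_pos_right h2x).mpr hAC
      have heq : (1 - 3 / (2 * X)) * (1 / X * (Av + (1 + b) * Δ 1)) +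
          (Av + (1 + b) * Δ 1) / (2 * X ^ 2) =
          (Av + (1 + b) * Δ 1) * (X - 1) / X ^ 2 := by
        field_simp; ring
      have e3 : (Av + (1 + b) * Δ 1) * (X - 1) / X ^ 2 ≤
          1 / (X + 1) * (Av + (1 + b) * Δ 1) := by
        rw [show 1 / (X + 1) * (Av + (1 + b) * Δ 1) = (Av + (1 + b) * Δ 1) / (X + 1) from by
          ring, div_le_div_iff₀ (pow_pos hXpos 2) hX1pos]
        have hexp : (Av + (1 + b) * Δ 1) * (X - 1) * (X + 1) =
            (Av + (1 + b) * Δ 1) * X ^ 2 - (Av + (1 + b) * Δ 1) := by ring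
        linarith
      linarith only [step1, e1, e2, heq, e3]
end
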